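/- In any mutual search algorithm on n sites, the sum of the lengths of the two shortest rows is a lower bound on the cost of the algorithm. -/

import Mathlib

/-!
Let `(a, b)` be the last edge of the tournament. Every other query of `a` and every query of `b`
comes before it, so its cost is `|E_a| + |E_b|`. This sum is at least the minimal sum of two row
lengths, which is therefore at most the cost.
-/

/-- An ordered tournament on `n` sites: a tournament (exactly one directed
edge between each pair of distinct vertices) together with a total order
on its edges, given by an (injective-on-edges) time stamp. -/
structure OrdTournament (n : ℕ) where
  adj : Fin n → Fin n → Bool
  irrefl : ∀ i, adj i i = false
  oneway : ∀ i j : Fin n, i ≠ j → (adj i j = true ↔ adj j i = false)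
  time : Fin n → Fin n → ℕ
  time_inj : ∀ i j k l : Fin n, adj i j = true → adj k l = true →
      time i j = time k l → (i, j) = (k, l)

namespace OrdTournament

variable {n : ℕ}

/-- Row `i`: the targets of the out-edges of vertex `i`. -/
def row (T : OrdTournament n) (i : Fin n) : Finset (Fin n) :=
  Finset.univ.filter (fun j => T.adj i j = true)

/-- The length of row `i` (the outdegree of `i`). -/
def rowLen (T : OrdTournament n) (i : Fin n) : ℕ := (T.row i).card

/-- The maximum row length. -/
def maxRow (T : OrdTournament n) : ℕ := Finset.univ.sup T.rowLen

/-- The number of queries of row `i` strictly before the edge `(a,b)`. -/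
def nBefore (T : OrdTournament n) (i a b : Fin n) : ℕ :=
  ((T.row i).filter (fun j => T.time i j < T.time a b)).card

/-- The cost of edge `(a,b)`:
`|E_a^{≺(a,b)}| + 1 + |E_b^{≺(a,b)}|`. -/
def edgeCost (T : OrdTournament n) (a b : Fin n) : ℕ :=
  T.nBefore a a b + 1 + T.nBefore b a b

/-- The cost of the algorithm: the maximum edge cost. -/
def cost (T : OrdTournament n) : ℕ :=
  (Finset.univ.filter (fun p : Fin n × Fin n => T.adj p.1 p.2 = true)).sup
    (fun p => T.edgeCost p.1 p.2)

end OrdTournament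

theorem exists_ne_pair_min_add {α β : Type*} [Fintype α] [Nontrivial α] [Add β] [LinearOrder β]
    (f : α → β) : ∃ i j : α, i ≠ j ∧ ∀ k l : α, k ≠ l → f i + f j ≤ f k + f l := by
  classical
  obtain ⟨i₀, j₀, hij₀⟩ := exists_pair_ne α
  obtain ⟨⟨i, j⟩, hij, hmin⟩ := Finset.exists_min_image Finset.univ.offDiag
    (fun p : α × α => f p.1 + f p.2) ⟨(i₀, j₀), by simpa using hij₀⟩
  exact ⟨i, j, (Finset.mem_offDiag.mp hij).2.2,
    fun k l hkl => hmin (k, l) (by simpa using hkl)⟩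

namespace OrdTournament

variable {n : ℕ} (T : OrdTournament n)

theorem mem_row {i j : Fin n} : j ∈ T.row i ↔ T.adj i j = true := by
  simp [row]

theorem ne_of_adj {i j : Fin n} (h : T.adj i j = true) : i ≠ j := by
  rintro rfl
  simp [T.irrefl] at h

theorem adj_or_adj_of_ne {i j : Fin n} (h : i ≠ j) : T.adj i j = true ∨ T.adj j i = true := by
  cases hij : T.adj i j
  · exact Or.inr ((T.oneway j i h.symm).mpr hij)
  · exact Or.inl rfl

theorem edgeCost_le_cost {a b : Fin n} (hab : T.adj a b = true) : T.edgeCost a b ≤ T.cost :=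
  Finset.le_sup (f := fun p : Fin n × Fin n => T.edgeCost p.1 p.2) (b := (a, b)) (by simp [hab])

def IsLastEdge (a b : Fin n) : Prop :=
  T.adj a b = true ∧ ∀ c d : Fin n, T.adj c d = true → T.time c d ≤ T.time a b

theorem exists_isLastEdge {i j : Fin n} (hij : i ≠ j) : ∃ a b : Fin n, T.IsLastEdge a b := by
  have hne : (Finset.univ.filter fun p : Fin n × Fin n => T.adj p.1 p.2 = true).Nonempty := by
    rcases T.adj_or_adj_of_ne hij with h | h
    · exact ⟨(i, j), by simpa using h⟩
    · exact ⟨(j, i), by simpa using h⟩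
  obtain ⟨⟨a, b⟩, hab, hmax⟩ := Finset.exists_max_image _ (fun p => T.time p.1 p.2) hne
  exact ⟨a, b, by simpa using hab, fun c d hcd => hmax (c, d) (by simpa using hcd)⟩

variable {T}

theorem IsLastEdge.time_lt {a b c d : Fin n} (h : T.IsLastEdge a b) (hcd : T.adj c d = true)
    (hne : (c, d) ≠ (a, b)) : T.time c d < T.time a b :=
  (h.2 c d hcd).lt_of_ne fun heq => hne (T.time_inj c d a b hcd h.1 heq)

theorem IsLastEdge.nBefore_source {a b : Fin n} (h : T.IsLastEdge a b) :
    T.nBefore a a b = T.rowLen a - 1 := by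
  have hfilter : (T.row a).filter (fun j => T.time a j < T.time a b) = (T.row a).erase b := by
    ext j
    simp only [Finset.mem_filter, Finset.mem_erase, mem_row]
    constructor
    · rintro ⟨hj, hlt⟩
      exact ⟨by rintro rfl; exact lt_irrefl _ hlt, hj⟩
    · rintro ⟨hjb, hj⟩
      exact ⟨hj, h.time_lt hj (by simpa using hjb)⟩
  rw [nBefore, hfilter, Finset.card_erase_of_mem (T.mem_row.mpr h.1), rowLen]

theorem IsLastEdge.nBefore_target {a b : Fin n} (h : T.IsLastEdge a b) :
    T.nBefore b a b = T.rowLen b := by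
  rw [nBefore, rowLen, Finset.filter_true_of_mem]
  intro j hj
  exact h.time_lt (T.mem_row.mp hj) fun heq => T.ne_of_adj h.1 (congrArg Prod.fst heq).symm

theorem IsLastEdge.edgeCost_eq {a b : Fin n} (h : T.IsLastEdge a b) :
    T.edgeCost a b = T.rowLen a + T.rowLen b := by
  have hpos : 0 < T.rowLen a := Finset.card_pos.mpr ⟨b, T.mem_row.mpr h.1⟩
  rw [edgeCost, h.nBefore_source, h.nBefore_target]
  omega

end OrdTournament

/-- In any mutual search algorithm on `n ≥ 2` sites, the sum of the lengths of
the two shortest rows is a lower bound on the cost of the algorithm: there are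
two distinct vertices whose row-length sum is minimal among all pairs of
distinct vertices, and this sum is at most the cost. -/
theorem two_shortest_rows_lower_bound {n : ℕ} (hn : 2 ≤ n)
    (T : OrdTournament n) :
    ∃ i j : Fin n, i ≠ j ∧
      (∀ k l : Fin n, k ≠ l → T.rowLen i + T.rowLen j ≤ T.rowLen k + T.rowLen l) ∧
      T.rowLen i + T.rowLen j ≤ T.cost := by
  have : Nontrivial (Fin n) := Fin.nontrivial_iff_two_le.mpr hn
  obtain ⟨i, j, hij, hmin⟩ := exists_ne_pair_min_add T.rowLen
  obtain ⟨a, b, hlast⟩ := T.exists_isLastEdge hij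
  refine ⟨i, j, hij, hmin, ?_⟩
  calc T.rowLen i + T.rowLen j ≤ T.rowLen a + T.rowLen b := hmin a b (T.ne_of_adj hlast.1)
    _ = T.edgeCost a b := hlast.edgeCost_eq.symm
    _ ≤ T.cost := T.edgeCost_le_cost hlast.1
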